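/- arXiv:q-alg/9612014 — 2 statements merged into one kernel-verified Lean document; each statement's English description precedes it below -/
import Mathlib

section
/- (q-binomial theorem) For 0 < q < 1, |z| < 1, and a ∈ ℂ, Σ_{k=0}^∞ ((a;q)_k / (q;q)_k) z^k = (az;q)_∞ / (z;q)_∞. -/
/-- The finite q-Pochhammer symbol `(a;q)_k = ∏_{l=0}^{k-1} (1 - a q^l)`. -/
noncomputable def qPoch (q a : ℂ) (k : ℕ) : ℂ := ∏ l ∈ Finset.range k, (1 - a * q ^ l)

/-- The infinite q-Pochhammer symbol `(a;q)_∞ = ∏_{l≥0} (1 - a q^l)`. -/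
noncomputable def qPochInf (q a : ℂ) : ℂ := ∏' l : ℕ, (1 - a * q ^ l)

/-!
Write `F(z) = ∑ c_k z^k` with `c_k = (a;q)_k / (q;q)_k`. The recurrence
`c_{k+1} (1 - q^{k+1}) = c_k (1 - a q^k)` turns into the functional equation
`(1 - z) F(z) = (1 - a z) F(q z)`, and iterating it gives
`(z;q)_n F(z) = (az;q)_n F(q^n z)`. As `n → ∞` the finite products converge to the infinite
ones and `F(q^n z) → F(0) = 1`.
-/

open Filter Finset Topology

noncomputable def qBinomialCoeff (q a : ℂ) (k : ℕ) : ℂ := qPoch q a k / qPoch q q k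

noncomputable def qBinomialSeries (q a z : ℂ) : ℂ := ∑' k : ℕ, qBinomialCoeff q a k * z ^ k

lemma qPoch_zero (q a : ℂ) : qPoch q a 0 = 1 := prod_range_zero _

lemma qPoch_succ (q a : ℂ) (k : ℕ) : qPoch q a (k + 1) = qPoch q a k * (1 - a * q ^ k) :=
  prod_range_succ _ _

lemma norm_pow_mul_le {q : ℂ} (hq : ‖q‖ ≤ 1) (w : ℂ) (n : ℕ) :
    ‖q ^ n * w‖ ≤ ‖w‖ := by
  rw [norm_mul, norm_pow]
  exact mul_le_of_le_one_left (norm_nonneg w) (pow_le_one₀ (norm_nonneg q) hq)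

lemma one_sub_mul_pow_ne_zero {q w : ℂ} (hq : ‖q‖ ≤ 1) (hw : ‖w‖ < 1) (l : ℕ) :
    1 - w * q ^ l ≠ 0 := by
  rw [sub_ne_zero, mul_comm]
  exact fun h => ((norm_pow_mul_le hq w l).trans_lt hw).ne (by rw [← h, norm_one])

lemma qPoch_ne_zero {q w : ℂ} (hq : ‖q‖ ≤ 1) (hw : ‖w‖ < 1) (k : ℕ) :
    qPoch q w k ≠ 0 :=
  prod_ne_zero_iff.mpr fun l _ => one_sub_mul_pow_ne_zero hq hw l

section

variable {q : ℂ} (hq : ‖q‖ < 1)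
include hq

lemma summable_norm_mul_pow (w : ℂ) : Summable fun l : ℕ => ‖w * q ^ l‖ := by
  simpa [norm_mul, norm_pow] using
    (summable_geometric_of_lt_one (norm_nonneg q) hq).mul_left ‖w‖

lemma hasProd_qPochInf (w : ℂ) : HasProd (fun l : ℕ => 1 - w * q ^ l) (qPochInf q w) := by
  have : Multipliable fun l : ℕ => 1 + -(w * q ^ l) :=
    multipliable_one_add_of_summable (by simpa using summable_norm_mul_pow hq w)
  simp only [← sub_eq_add_neg] at this
  exact this.hasProd

lemma tendsto_qPoch (w : ℂ) : Tendsto (qPoch q w) atTop (𝓝 (qPochInf q w)) :=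
  (hasProd_qPochInf hq w).tendsto_prod_nat

lemma qPochInf_ne_zero {w : ℂ} (hw : ‖w‖ < 1) : qPochInf q w ≠ 0 := by
  have := tprod_one_add_ne_zero_of_summable (f := fun l : ℕ => -(w * q ^ l))
    (fun l => by simpa [← sub_eq_add_neg] using one_sub_mul_pow_ne_zero hq.le hw l)
    (by simpa using summable_norm_mul_pow hq w)
  simp only [← sub_eq_add_neg] at this
  exact this

lemma qBinomialCoeff_succ_mul (a : ℂ) (k : ℕ) :
    qBinomialCoeff q a (k + 1) * (1 - q ^ (k + 1)) = qBinomialCoeff q a k * (1 - a * q ^ k) := by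
  have hk := qPoch_ne_zero hq.le hq k
  have hk' : 1 - q ^ (k + 1) ≠ 0 := by
    simpa only [pow_succ'] using one_sub_mul_pow_ne_zero hq.le hq k
  rw [qBinomialCoeff, qBinomialCoeff, qPoch_succ, qPoch_succ, ← pow_succ']
  field_simp

lemma tendsto_qBinomialCoeff (a : ℂ) :
    Tendsto (qBinomialCoeff q a) atTop (𝓝 (qPochInf q a / qPochInf q q)) :=
  (tendsto_qPoch hq a).div (tendsto_qPoch hq q) (qPochInf_ne_zero hq hq)

lemma exists_norm_qBinomialCoeff_le (a : ℂ) : ∃ M, ∀ k, ‖qBinomialCoeff q a k‖ ≤ M := by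
  obtain ⟨M, hM⟩ := (tendsto_qBinomialCoeff hq a).norm.bddAbove_range
  exact ⟨M, fun k => hM ⟨k, rfl⟩⟩

lemma summable_qBinomialCoeff_mul_pow (a : ℂ) {w : ℂ} (hw : ‖w‖ < 1) :
    Summable fun k => qBinomialCoeff q a k * w ^ k := by
  obtain ⟨M, hM⟩ := exists_norm_qBinomialCoeff_le hq a
  refine ((summable_geometric_of_lt_one (norm_nonneg w) hw).mul_left M).of_norm_bounded fun k => ?_
  rw [norm_mul, norm_pow]
  exact mul_le_mul_of_nonneg_right (hM k) (by positivity)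

lemma one_sub_mul_qBinomialSeries (a : ℂ) {w : ℂ} (hw : ‖w‖ < 1) :
    (1 - w) * qBinomialSeries q a w = (1 - a * w) * qBinomialSeries q a (q * w) := by
  have hqw : ‖q * w‖ < 1 := by simpa using (norm_pow_mul_le hq.le w 1).trans_lt hw
  have h1 : HasSum _ (qBinomialSeries q a w) := (summable_qBinomialCoeff_mul_pow hq a hw).hasSum
  have h2 : HasSum _ (qBinomialSeries q a (q * w)) :=
    (summable_qBinomialCoeff_mul_pow hq a hqw).hasSum
  -- the series of `(1 - q^k) c_k w^k`, summed directly and after the index shift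
  have hdiff := h1.sub h2
  have hshift := (h1.sub (h2.mul_left a)).mul_left w
  rw [← hasSum_nat_add_iff' 1] at hdiff
  have hterm : ∀ k, qBinomialCoeff q a (k + 1) * w ^ (k + 1)
      - qBinomialCoeff q a (k + 1) * (q * w) ^ (k + 1)
      = w * (qBinomialCoeff q a k * w ^ k - a * (qBinomialCoeff q a k * (q * w) ^ k)) := fun k => by
    linear_combination w ^ (k + 1) * qBinomialCoeff_succ_mul hq a k
  simp only [hterm, sum_range_one, pow_zero, mul_one, sub_self, sub_zero] at hdiff
  linear_combination hdiff.unique hshift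

lemma qPoch_mul_qBinomialSeries (a : ℂ) {z : ℂ} (hz : ‖z‖ < 1) (n : ℕ) :
    qPoch q z n * qBinomialSeries q a z = qPoch q (a * z) n * qBinomialSeries q a (q ^ n * z) := by
  induction n with
  | zero => simp [qPoch_zero]
  | succ n ih =>
    have hfe := one_sub_mul_qBinomialSeries hq a ((norm_pow_mul_le hq.le z n).trans_lt hz)
    rw [show q * (q ^ n * z) = q ^ (n + 1) * z by ring] at hfe
    rw [qPoch_succ, qPoch_succ]
    linear_combination (1 - z * q ^ n) * ih + qPoch q (a * z) n * hfe

lemma tendsto_qBinomialSeries_pow_mul (a : ℂ) {z : ℂ} (hz : ‖z‖ < 1) :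
    Tendsto (fun n : ℕ => qBinomialSeries q a (q ^ n * z)) atTop (𝓝 1) := by
  obtain ⟨M, hM⟩ := exists_norm_qBinomialCoeff_le hq a
  have hlim : Tendsto (fun n : ℕ => q ^ n * z) atTop (𝓝 0) := by
    simpa using (tendsto_pow_atTop_nhds_zero_of_norm_lt_one hq).mul_const z
  have hbound (n k : ℕ) : ‖qBinomialCoeff q a k * (q ^ n * z) ^ k‖ ≤ M * ‖z‖ ^ k := by
    rw [norm_mul, norm_pow]
    exact mul_le_mul (hM k) (pow_le_pow_left₀ (norm_nonneg _) (norm_pow_mul_le hq.le z n) k)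
      (by positivity) ((norm_nonneg _).trans (hM 0))
  have hsum : ∑' k, qBinomialCoeff q a k * (0 : ℂ) ^ k = 1 := by
    rw [tsum_eq_single 0 fun k hk => by simp [hk]]
    simp [qBinomialCoeff, qPoch_zero]
  have := tendsto_tsum_of_dominated_convergence
    ((summable_geometric_of_lt_one (norm_nonneg z) hz).mul_left M)
    (fun k => (hlim.pow k).const_mul (qBinomialCoeff q a k)) (Eventually.of_forall (hbound ·))
  rwa [hsum] at this

end

/-- q-binomial theorem: for `0 < q < 1` and `|z| < 1`,
`Σ_k ((a;q)_k / (q;q)_k) z^k = (az;q)_∞ / (z;q)_∞`. -/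
theorem q_binomial_theorem (q : ℝ) (hq0 : 0 < q) (hq1 : q < 1)
    (a z : ℂ) (hz : ‖z‖ < 1) :
    ∑' k : ℕ, qPoch q a k / qPoch q (q : ℂ) k * z ^ k
      = qPochInf q (a * z) / qPochInf q z := by
  have hq : ‖(q : ℂ)‖ < 1 := by rwa [Complex.norm_real, Real.norm_of_nonneg hq0.le]
  change qBinomialSeries q a z = _
  have hlim₁ := (tendsto_qPoch hq z).mul_const (qBinomialSeries q a z)
  have hlim₂ := (tendsto_qPoch hq (a * z)).mul (tendsto_qBinomialSeries_pow_mul hq a hz)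
  rw [mul_one] at hlim₂
  have hlim := tendsto_nhds_unique hlim₁
    (hlim₂.congr fun n => (qPoch_mul_qBinomialSeries hq a hz n).symm)
  rw [eq_div_iff (qPochInf_ne_zero hq hz)]
  linear_combination hlim
end

section
/- (Euler's integral representation) For Re c > Re a > 0 (with appropriate branch conventions) and |z| < 1, F(a,b,c;z) = (Γ(c)/(Γ(a)Γ(c-a))) ∫_0^1 t^{a-1}(1-t)^{c-a-1}(1-zt)^{-b} dt, where F is the Gauss hypergeometric series. -/
/-- The ascending factorial `(a)_k = a(a+1)⋯(a+k-1)`. -/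
noncomputable def risingPoch (a : ℂ) (k : ℕ) : ℂ := ∏ l ∈ Finset.range k, (a + l)

/-!
For `0 ≤ t ≤ 1` the binomial series `(1 - zt)^{-b} = ∑ (b)_k/k! (zt)^k` is dominated by
`∑ |(b)_k/k!| |z|^k < ∞`, so it can be integrated term by term against the Beta weight
`t^{a-1}(1-t)^{c-a-1}`. The `k`-th moment of that weight is
`B(a+k, c-a) = Γ(a+k)Γ(c-a)/Γ(c+k)`, and `Γ(x+k) = (x)_k Γ(x)` turns the normalised moment
into `(a)_k/(c)_k`.
-/

open Nat MeasureTheory Complex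
open scoped Interval

theorem risingPoch_eq_ascPochhammer_eval (a : ℂ) (k : ℕ) :
    risingPoch a k = (ascPochhammer ℂ k).eval a := by
  induction k with
  | zero => simp [risingPoch]
  | succ k ih => simp [risingPoch, Finset.prod_range_succ, ascPochhammer_succ_eval, ← ih]

theorem choose_add_sub_one_eq_risingPoch_div_factorial (b : ℂ) (k : ℕ) :
    Ring.choose (b + k - 1) k = risingPoch b k / k ! := by
  rw [eq_div_iff (by simp [Nat.factorial_ne_zero]), mul_comm, ← nsmul_eq_mul,
    ← Ring.descPochhammer_eq_factorial_smul_choose,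
    Polynomial.descPochhammer_smeval_eq_ascPochhammer, Polynomial.ascPochhammer_smeval_cast,
    Polynomial.ascPochhammer_smeval_eq_eval, risingPoch_eq_ascPochhammer_eval]
  congr 1
  ring

theorem hasFPowerSeriesOnBall_one_sub_cpow_neg (b : ℂ) :
    HasFPowerSeriesOnBall (fun w ↦ (1 - w) ^ (-b))
      (.ofScalars ℂ fun k ↦ risingPoch b k / k !) 0 1 := by
  simpa [Complex.cpow_neg, choose_add_sub_one_eq_risingPoch_div_factorial] using
    Complex.one_div_one_sub_cpow_hasFPowerSeriesOnBall_zero b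

theorem hasSum_risingPoch_div_factorial_mul_pow (b : ℂ) {w : ℂ} (hw : ‖w‖ < 1) :
    HasSum (fun k ↦ risingPoch b k / k ! * w ^ k) ((1 - w) ^ (-b)) := by
  simpa [FormalMultilinearSeries.ofScalars_apply_eq, mul_comm] using
    (hasFPowerSeriesOnBall_one_sub_cpow_neg b).hasSum (y := w)
      (by rw [Metric.mem_eball, edist_zero_right, ← ofReal_norm]; exact ENNReal.ofReal_lt_one.2 hw)

theorem summable_norm_risingPoch_div_factorial_mul_pow (b : ℂ) {r : ℝ} (hr0 : 0 ≤ r)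
    (hr : r < 1) :
    Summable fun k ↦ ‖risingPoch b k / (k ! : ℂ)‖ * r ^ k := by
  lift r to NNReal using hr0
  simpa [FormalMultilinearSeries.ofScalars_norm] using
    FormalMultilinearSeries.summable_norm_mul_pow _
      ((ENNReal.coe_lt_one_iff.2 hr).trans_le (hasFPowerSeriesOnBall_one_sub_cpow_neg b).r_le)

theorem ne_neg_natCast_of_re_pos {a : ℂ} (ha : 0 < a.re) (m : ℕ) : a ≠ -m := by
  rintro rfl
  simp only [neg_re, natCast_re, Left.neg_pos_iff] at ha
  exact (m.cast_nonneg (α := ℝ)).not_gt ha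

theorem Gamma_add_nat_eq_risingPoch_mul_Gamma {a : ℂ} (ha : ∀ m : ℕ, a ≠ -m) (k : ℕ) :
    Gamma (a + k) = risingPoch a k * Gamma a := by
  rw [risingPoch_eq_ascPochhammer_eval, ← Gamma_add_nat_div_Gamma_eq a ha,
    div_mul_cancel₀ _ (Gamma_ne_zero ha)]

theorem intervalIntegral_cpow_mul_pow_eq_betaIntegral (a b : ℂ) (k : ℕ) :
    ∫ t in (0 : ℝ)..1, (t : ℂ) ^ (a - 1) * (1 - (t : ℂ)) ^ (b - 1) * (t : ℂ) ^ k
      = betaIntegral (a + k) b := by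
  rw [betaIntegral]
  refine intervalIntegral.integral_congr_ae (ae_of_all _ fun t ht ↦ ?_)
  rw [Set.uIoc_of_le zero_le_one] at ht
  have ht0 : (t : ℂ) ≠ 0 := ofReal_ne_zero.2 ht.1.ne'
  rw [show a + k - 1 = a - 1 + k by ring, cpow_add _ _ ht0, cpow_natCast]
  ring

theorem Gamma_div_mul_betaIntegral_add_nat {a c : ℂ} (ha : 0 < a.re) (hac : a.re < c.re) (k : ℕ) :
    Gamma c / (Gamma a * Gamma (c - a)) * betaIntegral (a + k) (c - a)
      = risingPoch a k / risingPoch c k := by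
  have hc : 0 < c.re := ha.trans hac
  have hca : 0 < (c - a).re := by rw [sub_re]; linarith
  have hak : 0 < (a + k).re := by rw [add_re, natCast_re]; positivity
  have hbeta := Gamma_mul_Gamma_eq_betaIntegral hak hca
  rw [show a + k + (c - a) = c + k by ring,
    Gamma_add_nat_eq_risingPoch_mul_Gamma (ne_neg_natCast_of_re_pos ha),
    Gamma_add_nat_eq_risingPoch_mul_Gamma (ne_neg_natCast_of_re_pos hc)] at hbeta
  have hGc := Gamma_ne_zero_of_re_pos hc
  have hGca := Gamma_ne_zero_of_re_pos hca
  have hGa := Gamma_ne_zero_of_re_pos ha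
  have hck : risingPoch c k ≠ 0 := by
    have := Gamma_ne_zero_of_re_pos (s := c + k) (by rw [add_re, natCast_re]; positivity)
    rw [Gamma_add_nat_eq_risingPoch_mul_Gamma (ne_neg_natCast_of_re_pos hc)] at this
    exact left_ne_zero_of_mul this
  have hB : betaIntegral (a + k) (c - a)
      = risingPoch a k * Gamma a * Gamma (c - a) / (risingPoch c k * Gamma c) := by
    rw [hbeta, mul_div_cancel_left₀ _ (mul_ne_zero hck hGc)]
  rw [hB]
  field_simp

theorem hasSum_intervalIntegral_mul_pow {g : ℝ → ℂ} (hg : IntervalIntegrable g volume 0 1)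
    {c : ℕ → ℂ} {z : ℂ} (hc : Summable fun k ↦ ‖c k‖ * ‖z‖ ^ k) :
    HasSum (fun k ↦ c k * z ^ k * ∫ t in (0 : ℝ)..1, g t * (t : ℂ) ^ k)
      (∫ t in (0 : ℝ)..1, g t * ∑' k, c k * (z * t) ^ k) := by
  have hterm : ∀ k, ∀ t ∈ Ι (0 : ℝ) 1, ‖c k * (z * t) ^ k‖ ≤ ‖c k‖ * ‖z‖ ^ k := by
    intro k t ht
    rw [Set.uIoc_of_le zero_le_one] at ht
    have ht1 : ‖(t : ℂ)‖ ≤ 1 := by simpa [abs_of_pos ht.1] using ht.2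
    rw [norm_mul, norm_pow, norm_mul]
    gcongr
    exact mul_le_of_le_one_right (norm_nonneg z) ht1
  have hmeas : ∀ k, AEStronglyMeasurable (fun t : ℝ ↦ g t * (c k * (z * t) ^ k))
      (volume.restrict (Ι 0 1)) := fun k ↦
    hg.def'.aestronglyMeasurable.mul (by fun_prop : Continuous _).aestronglyMeasurable
  have hbound : ∀ k, ∀ t ∈ Ι (0 : ℝ) 1,
      ‖g t * (c k * (z * t) ^ k)‖ ≤ ‖c k‖ * ‖z‖ ^ k * ‖g t‖ := fun k t ht ↦ by
    rw [norm_mul, mul_comm]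
    exact mul_le_mul_of_nonneg_right (hterm k t ht) (norm_nonneg _)
  have hbound_int : IntervalIntegrable (fun t ↦ ∑' k, ‖c k‖ * ‖z‖ ^ k * ‖g t‖) volume 0 1 := by
    simp only [tsum_mul_right]
    exact hg.norm.const_mul _
  have hlim : ∀ t ∈ Ι (0 : ℝ) 1,
      HasSum (fun k ↦ g t * (c k * (z * t) ^ k)) (g t * ∑' k, c k * (z * t) ^ k) := fun t ht ↦
    ((hc.of_norm_bounded fun k ↦ hterm k t ht).hasSum).mul_left _
  have hintegral : ∀ k, ∫ t in (0 : ℝ)..1, g t * (c k * (z * t) ^ k)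
      = c k * z ^ k * ∫ t in (0 : ℝ)..1, g t * (t : ℂ) ^ k := fun k ↦ by
    rw [← intervalIntegral.integral_const_mul]
    congr 1 with t
    ring
  simpa only [hintegral] using intervalIntegral.hasSum_integral_of_dominated_convergence _ hmeas
    (fun k ↦ ae_of_all _ (hbound k)) (ae_of_all _ fun t _ ↦ hc.mul_right _) hbound_int
    (ae_of_all _ hlim)

/-- Euler's integral representation of the Gauss hypergeometric function:
for `Re c > Re a > 0` and `|z| < 1`,
`F(a,b,c;z) = (Γ(c)/(Γ(a)Γ(c-a))) ∫_0^1 t^{a-1}(1-t)^{c-a-1}(1-zt)^{-b} dt`. -/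
theorem euler_integral_representation (a b c z : ℂ)
    (ha : 0 < a.re) (hca : a.re < c.re) (hz : ‖z‖ < 1) :
    ∑' k : ℕ, risingPoch a k * risingPoch b k /
        (risingPoch c k * (Nat.factorial k : ℂ)) * z ^ k
      = Complex.Gamma c / (Complex.Gamma a * Complex.Gamma (c - a)) *
        ∫ t in (0 : ℝ)..1,
          (t : ℂ) ^ (a - 1) * ((1 : ℂ) - t) ^ (c - a - 1) * (1 - z * t) ^ (-b) := by
  have hca' : 0 < (c - a).re := by rw [sub_re]; linarith
  have hbinomial : ∀ t ∈ Set.uIcc (0 : ℝ) 1,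
      ∑' k, risingPoch b k / (k ! : ℂ) * (z * t) ^ k = (1 - z * t) ^ (-b) := by
    intro t ht
    rw [Set.uIcc_of_le zero_le_one] at ht
    refine (hasSum_risingPoch_div_factorial_mul_pow b ?_).tsum_eq
    rw [norm_mul, norm_real, Real.norm_of_nonneg ht.1]
    exact (mul_le_of_le_one_right (norm_nonneg z) ht.2).trans_lt hz
  have hseries := hasSum_intervalIntegral_mul_pow (betaIntegral_convergent ha hca')
    (summable_norm_risingPoch_div_factorial_mul_pow b (norm_nonneg z) hz)
  rw [intervalIntegral.integral_congr fun t ht ↦ congrArg _ (hbinomial t ht)] at hseries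
  rw [← hseries.tsum_eq, ← tsum_mul_left]
  refine tsum_congr fun k ↦ ?_
  rw [intervalIntegral_cpow_mul_pow_eq_betaIntegral, mul_left_comm (Gamma c / _),
    Gamma_div_mul_betaIntegral_add_nat ha hca k]
  ring
end
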